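/- arXiv:2604.09143 — 3 statements merged into one kernel-verified Lean document; each statement's English description precedes it below -/
import Mathlib

section
/- Reversion property (finite outcome case): Let f(y | x) > 0 be a probability mass function on a finite set Y depending on a real parameter x, with Σ_y f(y|x) = 1, differentiable in x, and such that x ↦ ln f(y|x) is strictly concave for each y. Define ∇(x; y) = ∂ ln f(y|x)/∂x. Then for a true parameter s and rating r: if r < s then Σ_y ∇(r; y) f(y|s) > 0; if r > s then the sum is < 0; if r = s the sum is 0. -/
open Real

theorem reversion_property {Y : Type*} [Fintype Y]
    (f : Y → ℝ → ℝ)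
    (hdiff : ∀ y, Differentiable ℝ (f y))
    (hpos : ∀ y x, 0 < f y x)
    (hsum : ∀ x, ∑ y : Y, f y x = 1)
    (hconc : ∀ y, StrictConcaveOn ℝ Set.univ (fun x => Real.log (f y x))) :
    ∀ r s : ℝ,
      (r < s → 0 < ∑ y : Y, deriv (fun x => Real.log (f y x)) r * f y s) ∧
      (s < r → ∑ y : Y, deriv (fun x => Real.log (f y x)) r * f y s < 0) ∧
      (r = s → ∑ y : Y, deriv (fun x => Real.log (f y x)) r * f y s = 0) := by
  intro r s
  -- log derivative
  have hlog : ∀ y x, HasDerivAt (fun x => Real.log (f y x))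
      (deriv (f y) x / f y x) x := fun y x =>
    ((hdiff y x).hasDerivAt).log (ne_of_gt (hpos y x))
  have hgdiff : ∀ y, Differentiable ℝ (fun x => Real.log (f y x)) := fun y x =>
    (hlog y x).differentiableAt
  -- derivative of the sum of f's is zero
  have hderivsum : ∀ x, ∑ y : Y, deriv (f y) x = 0 := by
    intro x
    have h1 : HasDerivAt (fun x => ∑ y : Y, f y x) (∑ y : Y, deriv (f y) x) x :=
      HasDerivAt.fun_sum fun y _ => (hdiff y x).hasDerivAt
    have h2 : (fun x => ∑ y : Y, f y x) = fun _ => (1 : ℝ) := funext fun x => hsum x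
    rw [h2] at h1
    have := h1.deriv
    simpa using this.symm
  -- value at r = s
  have hzero : ∑ y : Y, deriv (fun x => Real.log (f y x)) s * f y s = 0 := by
    have : ∀ y : Y, deriv (fun x => Real.log (f y x)) s * f y s = deriv (f y) s := by
      intro y
      rw [(hlog y s).deriv]
      rw [div_mul_cancel₀ _ (ne_of_gt (hpos y s))]
    rw [Finset.sum_congr rfl fun y _ => this y]
    exact hderivsum s
  -- nonempty
  have hne : (Finset.univ : Finset Y).Nonempty := by
    by_contra h
    rw [Finset.not_nonempty_iff_eq_empty] at h
    have := hsum 0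
    rw [h] at this
    simp at this
  -- strict antitonicity of each log-derivative
  have hanti : ∀ y, StrictAntiOn (deriv (fun x => Real.log (f y x))) Set.univ := fun y =>
    (hconc y).strictAntiOn_deriv fun x _ => (hgdiff y x)
  refine ⟨?_, ?_, ?_⟩
  · intro hrs
    rw [← hzero]
    apply Finset.sum_lt_sum_of_nonempty hne
    intro y _
    exact mul_lt_mul_of_pos_right (hanti y (Set.mem_univ r) (Set.mem_univ s) hrs) (hpos y s)
  · intro hsr
    rw [← hzero]
    apply Finset.sum_lt_sum_of_nonempty hne
    intro y _
    exact mul_lt_mul_of_pos_right (hanti y (Set.mem_univ s) (Set.mem_univ r) hsr) (hpos y s)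
  · rintro rfl
    exact hzero
end

section
/- In the Skellam margin-of-victory model, a winning player may still receive a negative score: for any α > 0 and any margin d ≥ 1, there exist ratings r_A > r_B such that ∇_A = α(d - 2 sinh(α(r_A - r_B))) < 0. -/
open Real

theorem skellam_winner_negative_score (α : ℝ) (hα : 0 < α) (d : ℤ) (hd : 1 ≤ d) :
    ∃ rA rB : ℝ, rB < rA ∧ α * ((d : ℝ) - 2 * Real.sinh (α * (rA - rB))) < 0 := by
  have hd' : (1 : ℝ) ≤ (d : ℝ) := by exact_mod_cast hd
  refine ⟨Real.arsinh d / α, 0, ?_, ?_⟩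
  · have : 0 < Real.arsinh d := by rw [Real.arsinh_pos_iff]; linarith
    positivity
  · have h : α * (Real.arsinh d / α - 0) = Real.arsinh d := by
      field_simp
      ring
    rw [h, Real.sinh_arsinh]
    nlinarith
end

section
/- In the ordered logit win/draw/loss model, the derivative with respect to Δ of ln P(draw) = ln[1/(1+exp(-δ+αΔ)) - 1/(1+exp(δ+αΔ))] equals -α sinh(αΔ) / (cosh(δ) + cosh(αΔ)); in particular, the draw score is positive if Δ < 0, zero if Δ = 0, and negative if Δ > 0, and lies strictly in (-α, α). -/
open Real

lemma key_eq (δ t : ℝ) :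
    1 / (1 + exp (-δ + t)) - 1 / (1 + exp (δ + t)) = Real.sinh δ / (Real.cosh δ + Real.cosh t) := by
  have h1 : (0:ℝ) < 1 + exp (-δ + t) := by positivity
  have h2 : (0:ℝ) < 1 + exp (δ + t) := by positivity
  have h3 : (0:ℝ) < Real.cosh δ + Real.cosh t := by positivity
  rw [eq_div_iff h3.ne']
  simp only [Real.sinh_eq, Real.cosh_eq, Real.exp_add, Real.exp_neg]
  have hd : exp δ ≠ 0 := (Real.exp_pos δ).ne'
  have ht : exp t ≠ 0 := (Real.exp_pos t).ne'
  have h1' : (1 : ℝ) + (exp δ)⁻¹ * exp t ≠ 0 := by positivity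
  have h2' : (1 : ℝ) + exp δ * exp t ≠ 0 := by positivity
  field_simp
  ring

theorem ordered_logit_draw_score (α δ : ℝ) (hα : 0 < α) (hδ : 0 < δ) :
    ∀ Δ : ℝ,
      deriv (fun x => Real.log (1 / (1 + exp (-δ + α * x)) - 1 / (1 + exp (δ + α * x)))) Δ
        = -α * Real.sinh (α * Δ) / (Real.cosh δ + Real.cosh (α * Δ)) ∧
      (Δ < 0 → 0 < -α * Real.sinh (α * Δ) / (Real.cosh δ + Real.cosh (α * Δ))) ∧
      (Δ = 0 → -α * Real.sinh (α * Δ) / (Real.cosh δ + Real.cosh (α * Δ)) = 0) ∧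
      (0 < Δ → -α * Real.sinh (α * Δ) / (Real.cosh δ + Real.cosh (α * Δ)) < 0) ∧
      -α < -α * Real.sinh (α * Δ) / (Real.cosh δ + Real.cosh (α * Δ)) ∧
      -α * Real.sinh (α * Δ) / (Real.cosh δ + Real.cosh (α * Δ)) < α := by
  intro Δ
  have hsδ : 0 < Real.sinh δ := Real.sinh_pos_iff.2 hδ
  have hden : ∀ t : ℝ, (0:ℝ) < Real.cosh δ + Real.cosh t := fun t => by positivity
  have hD := hden (α * Δ)
  refine ⟨?_, ?_, ?_, ?_, ?_, ?_⟩
  · -- derivative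
    have hfun : (fun x => Real.log (1 / (1 + exp (-δ + α * x)) - 1 / (1 + exp (δ + α * x))))
        = fun x => Real.log (Real.sinh δ) - Real.log (Real.cosh δ + Real.cosh (α * x)) := by
      funext x
      rw [key_eq δ (α * x), Real.log_div hsδ.ne' (hden (α * x)).ne']
    rw [hfun]
    have hg : HasDerivAt (fun x : ℝ => Real.cosh δ + Real.cosh (α * x))
        (Real.sinh (α * Δ) * α) Δ := by
      have h1 : HasDerivAt (fun x : ℝ => α * x) α Δ := by
        simpa using (hasDerivAt_id Δ).const_mul α
      exact ((Real.hasDerivAt_cosh (α * Δ)).comp Δ h1).const_add _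
    have hlog : HasDerivAt (fun x : ℝ => Real.log (Real.cosh δ + Real.cosh (α * x)))
        (Real.sinh (α * Δ) * α / (Real.cosh δ + Real.cosh (α * Δ))) Δ := hg.log hD.ne'
    have := (hlog.const_sub (Real.log (Real.sinh δ))).deriv
    rw [this]
    ring
  · intro h
    have : Real.sinh (α * Δ) < 0 := Real.sinh_neg_iff.2 (by nlinarith)
    have : 0 < -α * Real.sinh (α * Δ) := by nlinarith
    positivity
  · intro h; simp [h]
  · intro h
    have hs : 0 < Real.sinh (α * Δ) := Real.sinh_pos_iff.2 (by positivity)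
    exact div_neg_of_neg_of_pos (by nlinarith) hD
  · have habs : |Real.sinh (α * Δ)| < Real.cosh δ + Real.cosh (α * Δ) := by
      rcases abs_cases (Real.sinh (α * Δ)) with ⟨he, _⟩ | ⟨he, _⟩ <;> rw [he]
      · have := Real.sinh_lt_cosh (x := α * Δ); nlinarith [Real.cosh_pos δ]
      · have := Real.sinh_lt_cosh (x := -(α * Δ))
        rw [Real.sinh_neg, Real.cosh_neg] at this
        nlinarith [Real.cosh_pos δ]
    rw [neg_mul, neg_div, neg_lt_neg_iff, div_lt_iff₀ hD]
    calc α * Real.sinh (α * Δ) ≤ α * |Real.sinh (α * Δ)| := by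
          nlinarith [le_abs_self (Real.sinh (α * Δ))]
      _ < α * (Real.cosh δ + Real.cosh (α * Δ)) := by nlinarith
  · have habs : |Real.sinh (α * Δ)| < Real.cosh δ + Real.cosh (α * Δ) := by
      rcases abs_cases (Real.sinh (α * Δ)) with ⟨he, _⟩ | ⟨he, _⟩ <;> rw [he]
      · have := Real.sinh_lt_cosh (x := α * Δ); nlinarith [Real.cosh_pos δ]
      · have := Real.sinh_lt_cosh (x := -(α * Δ))
        rw [Real.sinh_neg, Real.cosh_neg] at this
        nlinarith [Real.cosh_pos δ]
    rw [div_lt_iff₀ hD]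
    calc -α * Real.sinh (α * Δ) ≤ α * |Real.sinh (α * Δ)| := by
          nlinarith [neg_abs_le (Real.sinh (α * Δ))]
      _ < α * (Real.cosh δ + Real.cosh (α * Δ)) := by nlinarith
end
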